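/- arXiv:1505.07746 — 4 statements merged into one kernel-verified Lean document; each statement's English description precedes it below -/
import Mathlib

section
/- Substituting $k(t) = \ell(t)^2$ transforms the functional $E(k) = \int_0^1 \frac{|k'(t)|^2}{k(t)}\,dt$ into $E = 4\int_0^1 |\ell'(t)|^2\,dt$; consequently, among curves with $k(0) = k_0 > 0$ and $k(1) = k_1 > 0$, the minimum of $E$ is $4(\sqrt{k_0} - \sqrt{k_1})^2$. -/
/-!
For `k = ℓ²` with `ℓ ≠ 0` one has `(k')² / k = (2ℓℓ')² / ℓ² = 4ℓ'²`, pointwise. Applying this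
to `ℓ = √k`, the energy of `k` is `4 ∫₀¹ ℓ'²`, and Cauchy–Schwarz together with the fundamental
theorem of calculus gives `(√k₁ - √k₀)² = (∫₀¹ ℓ')² ≤ ∫₀¹ ℓ'²`. Equality holds when `ℓ'` is
constant, i.e. for `√k` affine.
-/

open intervalIntegral Set

theorem sq_integral_le_mul_integral_sq {g : ℝ → ℝ} {a b : ℝ} (hab : a ≤ b)
    (hg : IntervalIntegrable g MeasureTheory.volume a b)
    (hg2 : IntervalIntegrable (fun t => g t ^ 2) MeasureTheory.volume a b) :
    (∫ t in a..b, g t) ^ 2 ≤ (b - a) * ∫ t in a..b, g t ^ 2 := by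
  set I := ∫ t in a..b, g t
  -- Cauchy–Schwarz from `0 ≤ ∫ ((b - a) g - I)²`
  have hexp : ∫ t in a..b, ((b - a) * g t - I) ^ 2
      = (b - a) * ((b - a) * ∫ t in a..b, g t ^ 2) - (b - a) * I ^ 2 := by
    have hfun : (fun t => ((b - a) * g t - I) ^ 2)
        = fun t => ((b - a) ^ 2 * g t ^ 2 - (2 * (b - a) * I) * g t) + I ^ 2 := by
      funext t; ring
    rw [hfun, integral_add ((hg2.const_mul _).sub (hg.const_mul _)) intervalIntegrable_const,
      integral_sub (hg2.const_mul _) (hg.const_mul _), integral_const_mul, integral_const_mul,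
      integral_const, smul_eq_mul]
    ring
  have hnonneg : 0 ≤ ∫ t in a..b, ((b - a) * g t - I) ^ 2 :=
    integral_nonneg hab fun t _ => sq_nonneg _
  rcases hab.eq_or_lt with rfl | hlt
  · simp [I]
  · rw [hexp] at hnonneg
    nlinarith [sub_pos.2 hlt]

theorem sq_sub_le_mul_integral_deriv_sq {ℓ : ℝ → ℝ} {a b : ℝ} (hab : a ≤ b)
    (hℓ : ∀ t ∈ Icc a b, ContDiffAt ℝ 1 ℓ t) :
    (ℓ b - ℓ a) ^ 2 ≤ (b - a) * ∫ t in a..b, deriv ℓ t ^ 2 := by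
  rw [← uIcc_of_le hab] at hℓ
  have hcont : ContinuousOn (deriv ℓ) (uIcc a b) := fun t ht =>
    ((((hℓ t ht).continuousAt_fderiv one_ne_zero).clm_apply continuousAt_const)).continuousWithinAt
  rw [← integral_deriv_eq_sub (fun t ht => (hℓ t ht).differentiableAt one_ne_zero)
    hcont.intervalIntegrable]
  exact sq_integral_le_mul_integral_sq hab hcont.intervalIntegrable (hcont.pow 2).intervalIntegrable

theorem deriv_sq_sq_div_sq {ℓ : ℝ → ℝ} {t : ℝ} (hd : DifferentiableAt ℝ ℓ t) (hne : ℓ t ≠ 0) :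
    deriv (fun s => ℓ s ^ 2) t ^ 2 / ℓ t ^ 2 = 4 * deriv ℓ t ^ 2 := by
  rw [(hd.hasDerivAt.fun_pow 2).deriv]
  field_simp
  ring

theorem integral_deriv_sq_sq_div_sq {ℓ : ℝ → ℝ} {a b : ℝ}
    (hℓ : ∀ t ∈ uIcc a b, DifferentiableAt ℝ ℓ t ∧ ℓ t ≠ 0) :
    ∫ t in a..b, deriv (fun s => ℓ s ^ 2) t ^ 2 / ℓ t ^ 2 = 4 * ∫ t in a..b, deriv ℓ t ^ 2 := by
  rw [← integral_const_mul]
  exact integral_congr fun t ht => deriv_sq_sq_div_sq (hℓ t ht).1 (hℓ t ht).2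

theorem deriv_sqrt_sq_eq {k : ℝ → ℝ} {t : ℝ} (hk : ContinuousAt k t) (hpos : 0 < k t) :
    deriv (fun s => √(k s) ^ 2) t = deriv k t := by
  refine Filter.EventuallyEq.deriv_eq ?_
  filter_upwards [hk.eventually (lt_mem_nhds hpos)] with s hs
  exact Real.sq_sqrt hs.le

theorem sq_sub_sqrt_le_mul_integral_deriv_sq_div {k : ℝ → ℝ} {a b : ℝ} (hab : a ≤ b)
    (hk : ∀ t ∈ Icc a b, ContDiffAt ℝ 1 k t) (hpos : ∀ t ∈ Icc a b, 0 < k t) :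
    4 * (√(k b) - √(k a)) ^ 2 ≤ (b - a) * ∫ t in a..b, deriv k t ^ 2 / k t := by
  set ℓ : ℝ → ℝ := fun s => √(k s)
  have hℓ : ∀ t ∈ Icc a b, ContDiffAt ℝ 1 ℓ t := fun t ht => (hk t ht).sqrt (hpos t ht).ne'
  have hsubst : ∫ t in a..b, deriv k t ^ 2 / k t = 4 * ∫ t in a..b, deriv ℓ t ^ 2 := by
    rw [← uIcc_of_le hab] at hk hpos hℓ
    rw [← integral_deriv_sq_sq_div_sq fun t ht =>
      ⟨(hℓ t ht).differentiableAt one_ne_zero, (Real.sqrt_pos.2 (hpos t ht)).ne'⟩]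
    refine integral_congr fun t ht => ?_
    simp only [ℓ, deriv_sqrt_sq_eq (hk t ht).continuousAt (hpos t ht), Real.sq_sqrt (hpos t ht).le]
  rw [hsubst]
  nlinarith [sq_sub_le_mul_integral_deriv_sq hab hℓ]

/-- The substitution `k = ℓ²` transforms `∫₀¹ |k'|²/k` into `4∫₀¹ |ℓ'|²`; consequently
among positive `C¹` curves with `k(0)=k₀ > 0`, `k(1)=k₁ > 0` the minimum of the energy
is `4(√k₀ - √k₁)²`. -/
theorem reaction_cost (k0 k1 : ℝ) (hk0 : 0 < k0) (hk1 : 0 < k1) :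
    (∀ ℓ : ℝ → ℝ, ContDiff ℝ 1 ℓ → (∀ t ∈ Set.Icc (0:ℝ) 1, 0 < ℓ t) →
      (∫ t in (0:ℝ)..1, (deriv (fun s => (ℓ s)^2) t)^2 / (ℓ t)^2)
        = 4 * ∫ t in (0:ℝ)..1, (deriv ℓ t)^2) ∧
    (∀ k : ℝ → ℝ, ContDiff ℝ 1 k → (∀ t ∈ Set.Icc (0:ℝ) 1, 0 < k t) →
      k 0 = k0 → k 1 = k1 →
      4 * (Real.sqrt k0 - Real.sqrt k1)^2 ≤ ∫ t in (0:ℝ)..1, (deriv k t)^2 / k t) ∧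
    (∃ k : ℝ → ℝ, ContDiff ℝ 1 k ∧ (∀ t ∈ Set.Icc (0:ℝ) 1, 0 < k t) ∧
      k 0 = k0 ∧ k 1 = k1 ∧
      (∫ t in (0:ℝ)..1, (deriv k t)^2 / k t) = 4 * (Real.sqrt k0 - Real.sqrt k1)^2) := by
  have substitution : ∀ ℓ : ℝ → ℝ, ContDiff ℝ 1 ℓ → (∀ t ∈ Icc (0:ℝ) 1, 0 < ℓ t) →
      ∫ t in (0:ℝ)..1, deriv (fun s => ℓ s ^ 2) t ^ 2 / ℓ t ^ 2
        = 4 * ∫ t in (0:ℝ)..1, deriv ℓ t ^ 2 := fun ℓ hℓ hpos =>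
    integral_deriv_sq_sq_div_sq fun t ht =>
      ⟨hℓ.differentiable one_ne_zero t, (hpos t (by rwa [uIcc_of_le zero_le_one] at ht)).ne'⟩
  refine ⟨substitution, fun k hk hpos h0 h1 => ?_, ?_⟩
  · have := sq_sub_sqrt_le_mul_integral_deriv_sq_div zero_le_one (fun t _ => hk.contDiffAt) hpos
    rwa [h0, h1, sub_zero, one_mul, ← neg_sub, neg_sq] at this
  -- the minimiser: `√k` interpolates linearly between `√k0` and `√k1`
  set ℓ : ℝ → ℝ := fun t => (1 - t) * √k0 + t * √k1
  have hℓ_deriv : ∀ t, deriv ℓ t = √k1 - √k0 := fun t =>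
    ((((hasDerivAt_id t).const_sub 1).mul_const √k0).add
      ((hasDerivAt_id t).mul_const √k1)).deriv.trans (by ring)
  have hℓ_pos : ∀ t ∈ Icc (0:ℝ) 1, 0 < ℓ t := fun t ⟨ht0, ht1⟩ => by
    have h0 := Real.sqrt_pos.2 hk0
    have h1 := Real.sqrt_pos.2 hk1
    simp only [ℓ]
    nlinarith [mul_nonneg (sub_nonneg.2 ht1) h0.le, mul_nonneg ht0 h1.le]
  have hℓ_smooth : ContDiff ℝ 1 ℓ := by fun_prop
  refine ⟨fun t => ℓ t ^ 2, hℓ_smooth.pow 2, fun t ht => pow_pos (hℓ_pos t ht) 2, ?_, ?_, ?_⟩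
  · simp [ℓ, Real.sq_sqrt hk0.le]
  · simp [ℓ, Real.sq_sqrt hk1.le]
  · simp only [substitution ℓ hℓ_smooth hℓ_pos, hℓ_deriv, integral_const, smul_eq_mul]
    ring
end

section
/- Let $(X, \varrho)$ be a complete length space and suppose there exists a Hausdorff topology $\sigma$ on $X$ such that every $\varrho$-bounded sequence has a $\sigma$-convergent subsequence, and such that $\varrho$ is sequentially lower semicontinuous with respect to $\sigma$: if $x_k \to x$ and $y_k \to y$ in $\sigma$, then $\varrho(x,y) \leq \liminf_k \varrho(x_k, y_k)$. Then any two points of $X$ admit a midpoint, i.e., for all $x, y \in X$ there is $z$ with $\varrho(x,z) = \varrho(z,y) = \frac{1}{2}\varrho(x,y)$; hence $(X, \varrho)$ is a geodesic space. -/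
open Filter

private lemma liminf_aux (w : ℕ → ℝ) (D : ℝ)
    (hw : ∀ k, 0 ≤ w k) (hb : ∀ k, w k ≤ D + (1 / ((k : ℝ) + 1)) / 2) :
    liminf w atTop ≤ D := by
  have hle : liminf w atTop ≤ liminf (fun k : ℕ => D + (1 / ((k : ℝ) + 1)) / 2) atTop := by
    refine liminf_le_liminf (Eventually.of_forall hb) ?_ ?_
    · exact ⟨0, eventually_map.2 <| Eventually.of_forall hw⟩
    · exact IsBoundedUnder.isCoboundedUnder_ge ⟨D + 1, eventually_map.2 <| Eventually.of_forall
        fun k => by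
          have h1 : 1 / ((k : ℝ) + 1) ≤ 1 := by
            rw [div_le_one (by positivity)]
            have : (0:ℝ) ≤ (k:ℝ) := Nat.cast_nonneg k
            linarith
          simp only; linarith⟩
  have htend : Tendsto (fun k : ℕ => D + (1 / ((k : ℝ) + 1)) / 2) atTop (nhds (D + 0 / 2)) :=
    Tendsto.const_add _ (tendsto_one_div_add_atTop_nhds_zero_nat.div_const 2)
  rw [htend.liminf_eq] at hle
  simpa using hle

/-- Lower-semicontinuous variant of Hopf–Rinow: a complete metric space with
almost-midpoints (length space), equipped with a Hausdorff topology `σ` for which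
bounded sequences have `σ`-convergent subsequences and the distance is sequentially
lower semicontinuous, admits midpoints between any two points (hence is geodesic). -/
theorem midpoints_exist {X : Type*} [MetricSpace X] [CompleteSpace X]
    (σ : TopologicalSpace X) (hT2 : @T2Space X σ)
    (hlength : ∀ x y : X, ∀ ε > 0, ∃ z : X,
      |dist x y - 2 * dist x z| ≤ ε ∧ |dist x y - 2 * dist y z| ≤ ε)
    (hcompact : ∀ u : ℕ → X, Bornology.IsBounded (Set.range u) →
      ∃ (φ : ℕ → ℕ) (z : X), StrictMono φ ∧
        Filter.Tendsto (u ∘ φ) Filter.atTop (@nhds X σ z))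
    (hlsc : ∀ (xk yk : ℕ → X) (x y : X),
      Filter.Tendsto xk Filter.atTop (@nhds X σ x) →
      Filter.Tendsto yk Filter.atTop (@nhds X σ y) →
      dist x y ≤ Filter.liminf (fun k => dist (xk k) (yk k)) Filter.atTop) :
    ∀ x y : X, ∃ z : X, dist x z = dist x y / 2 ∧ dist z y = dist x y / 2 := by
  intro x y
  have hzk : ∀ k : ℕ, ∃ z : X,
      |dist x y - 2 * dist x z| ≤ 1 / (k + 1) ∧ |dist x y - 2 * dist y z| ≤ 1 / (k + 1) := by
    intro k
    exact hlength x y (1 / (k + 1)) (by positivity)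
  choose u hu1 hu2 using hzk
  have hbx : ∀ k : ℕ, dist x (u k) ≤ dist x y / 2 + (1 / ((k : ℝ) + 1)) / 2 := by
    intro k
    have := abs_le.1 (hu1 k)
    linarith [this.1]
  have hby : ∀ k : ℕ, dist y (u k) ≤ dist x y / 2 + (1 / ((k : ℝ) + 1)) / 2 := by
    intro k
    have := abs_le.1 (hu2 k)
    linarith [this.1]
  have hone : ∀ k : ℕ, (1 : ℝ) / ((k : ℝ) + 1) ≤ 1 := by
    intro k
    rw [div_le_one (by positivity)]
    have : (0:ℝ) ≤ (k:ℝ) := Nat.cast_nonneg k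
    linarith
  have hbdd : Bornology.IsBounded (Set.range u) := by
    apply Metric.isBounded_range_iff.2
    refine ⟨dist x y + 2, fun i j => ?_⟩
    have hi := hbx i; have hj := hbx j
    have hi1 := hone i; have hj1 := hone j
    calc dist (u i) (u j) ≤ dist (u i) x + dist x (u j) := dist_triangle _ _ _
      _ ≤ dist x y + 2 := by rw [dist_comm (u i) x]; linarith
  obtain ⟨φ, z, hφ, hconv⟩ := hcompact u hbdd
  have hmono : ∀ k : ℕ, (1 : ℝ) / ((φ k : ℝ) + 1) ≤ 1 / ((k : ℝ) + 1) := by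
    intro k
    gcongr
    exact_mod_cast hφ.le_apply
  have hxz : dist x z ≤ dist x y / 2 := by
    refine (hlsc (fun _ => x) (u ∘ φ) x z tendsto_const_nhds hconv).trans ?_
    exact liminf_aux _ _ (fun k => dist_nonneg)
      (fun k => (hbx (φ k)).trans (by linarith [hmono k]))
  have hyz : dist y z ≤ dist x y / 2 := by
    refine (hlsc (fun _ => y) (u ∘ φ) y z tendsto_const_nhds hconv).trans ?_
    exact liminf_aux _ _ (fun k => dist_nonneg)
      (fun k => (hby (φ k)).trans (by linarith [hmono k]))
  have htri : dist x y ≤ dist x z + dist z y := dist_triangle _ _ _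
  have hzy : dist z y = dist y z := dist_comm _ _
  refine ⟨z, by rw [hzy] at htri; linarith, by rw [hzy]; linarith⟩
end

section
/- Let $X$ be a separable normed vector space with norm $\|\cdot\|$, and let $\{\|\cdot\|_k\}_{k \geq 0}$ be seminorms on $X$ with $\|x\|_k \leq C\|x\|$ for all $x, k$ and $\|x\|_k \to \|x\|_0$ as $k \to \infty$ for each $x$. Let $\varphi_k$ ($k \geq 1$) be linear functionals on $X$ with $|\varphi_k(x)| \leq c_k \|x\|_k$ for all $x$, where $c_k \leq C$. Then some subsequence $\varphi_{k_n}$ converges weakly-* in $X^*$ to a functional $\varphi_0$ satisfying $|\varphi_0(x)| \leq (\liminf_k c_k) \|x\|_0$ for all $x \in X$. -/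
open Filter

/-- Variant of the Banach–Alaoglu theorem with varying seminorms: functionals bounded
with respect to seminorms `‖·‖_k` converging pointwise to `‖·‖_0` admit a weakly-*
convergent subsequence whose limit is bounded by `(liminf c_k) ‖·‖_0`. -/
theorem banach_alaoglu_variant {X : Type*} [NormedAddCommGroup X] [NormedSpace ℝ X]
    [TopologicalSpace.SeparableSpace X]
    (p : ℕ → Seminorm ℝ X) (C : ℝ)
    (hbound : ∀ k, ∀ x : X, p k x ≤ C * ‖x‖)
    (hconv : ∀ x : X, Tendsto (fun k => p k x) atTop (nhds (p 0 x)))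
    (φ : ℕ → X →ₗ[ℝ] ℝ) (c : ℕ → ℝ)
    (hc0 : ∀ k, 0 ≤ c k) (hcC : ∀ k, c k ≤ C)
    (hφ : ∀ k, ∀ x : X, |φ k x| ≤ c k * p k x) :
    ∃ (kn : ℕ → ℕ) (φ0 : X →ₗ[ℝ] ℝ), StrictMono kn ∧
      (∀ x : X, Tendsto (fun n => φ (kn n) x) atTop (nhds (φ0 x))) ∧
      ∀ x : X, |φ0 x| ≤ (liminf c atTop) * p 0 x := by
  have hC : (0:ℝ) ≤ C := (hc0 0).trans (hcC 0)
  set L := liminf c atTop with hL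
  -- c is bounded
  have hbdd : IsBoundedUnder (· ≤ ·) atTop c := isBoundedUnder_of ⟨C, hcC⟩
  have hbdd' : IsBoundedUnder (· ≥ ·) atTop c := isBoundedUnder_of ⟨0, hc0⟩
  -- step 1: extract subsequence j with c ∘ j → L
  have hfreq : ∀ n : ℕ, ∃ᶠ k in atTop, |c k - L| < 1 / (n + 1) := by
    intro n
    have hpos : (0:ℝ) < 1 / (n + 1) := by positivity
    have h1 : ∃ᶠ k in atTop, c k < L + 1 / (n + 1) :=
      frequently_lt_of_liminf_lt hbdd.isCoboundedUnder_ge (by linarith)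
    have h2 : ∀ᶠ k in atTop, L - 1 / (n + 1) < c k :=
      eventually_lt_of_lt_liminf (by linarith) hbdd'
    refine (h1.and_eventually h2).mono ?_
    rintro k ⟨hk1, hk2⟩
    rw [abs_sub_lt_iff]
    constructor <;> linarith
  obtain ⟨j, hj, hjP⟩ := extraction_forall_of_frequently hfreq
  have hjL : Tendsto (fun n => c (j n)) atTop (nhds L) := by
    rw [tendsto_iff_dist_tendsto_zero]
    have h0 : Tendsto (fun n : ℕ => 1 / ((n : ℝ) + 1)) atTop (nhds 0) :=
      tendsto_one_div_add_atTop_nhds_zero_nat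
    refine squeeze_zero (fun n => dist_nonneg) (fun n => ?_) h0
    rw [Real.dist_eq]
    exact (hjP n).le
  -- uniform bound on φ
  have hB : ∀ k (x : X), |φ k x| ≤ C * C * ‖x‖ := by
    intro k x
    calc |φ k x| ≤ c k * p k x := hφ k x
      _ ≤ C * p k x := mul_le_mul_of_nonneg_right (hcC k) (apply_nonneg _ _)
      _ ≤ C * (C * ‖x‖) := mul_le_mul_of_nonneg_left (hbound k x) hC
      _ = C * C * ‖x‖ := by ring
  -- step 2: dense sequence and diagonal extraction
  have : Nonempty X := ⟨0⟩
  set D : ℕ → X := TopologicalSpace.denseSeq X with hD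
  have hDd : DenseRange D := TopologicalSpace.denseRange_denseSeq X
  set S : Set (ℕ → ℝ) := Set.univ.pi fun i => Set.Icc (-(C * C * ‖D i‖)) (C * C * ‖D i‖)
    with hS
  have hScomp : IsCompact S := isCompact_univ_pi fun i => isCompact_Icc
  have hmem : ∀ n, (fun i => φ (j n) (D i)) ∈ S := by
    intro n
    rw [Set.mem_univ_pi]
    intro i
    rw [Set.mem_Icc, ← abs_le]
    exact hB _ _
  obtain ⟨a, -, ψ, hψ, hFa⟩ := hScomp.isSeqCompact hmem
  have ha : ∀ i, Tendsto (fun n => φ (j (ψ n)) (D i)) atTop (nhds (a i)) := by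
    intro i
    exact (continuous_apply i).continuousAt.tendsto.comp hFa
  set kn := j ∘ ψ with hkn
  have hknmono : StrictMono kn := hj.comp hψ
  -- step 3: for each x, the sequence converges (Cauchy + density)
  have hlim : ∀ x : X, ∃ l, Tendsto (fun n => φ (kn n) x) atTop (nhds l) := by
    intro x
    apply cauchySeq_tendsto_of_complete
    rw [Metric.cauchySeq_iff]
    intro ε hε
    have hδpos : (0:ℝ) < ε / 3 / (C * C + 1) := by positivity
    obtain ⟨i, hi⟩ := hDd.exists_dist_lt x hδpos
    have hcau := (ha i).cauchySeq
    rw [Metric.cauchySeq_iff] at hcau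
    obtain ⟨N, hN⟩ := hcau (ε / 3) (by positivity)
    refine ⟨N, fun m hm n hn => ?_⟩
    have key : ∀ k, |φ k x - φ k (D i)| < ε / 3 := by
      intro k
      have h1 : |φ k (x - D i)| ≤ C * C * ‖x - D i‖ := hB k _
      rw [map_sub] at h1
      have h2 : ‖x - D i‖ < ε / 3 / (C * C + 1) := by
        rwa [← dist_eq_norm]
      calc |φ k x - φ k (D i)| ≤ C * C * ‖x - D i‖ := h1
        _ ≤ (C * C + 1) * ‖x - D i‖ := by nlinarith [norm_nonneg (x - D i)]
        _ < (C * C + 1) * (ε / 3 / (C * C + 1)) := by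
            apply mul_lt_mul_of_pos_left h2; positivity
        _ = ε / 3 := by field_simp
    have hN' := hN m hm n hn
    rw [Real.dist_eq] at hN' ⊢
    have e1 := key (kn m)
    have e2 := key (kn n)
    calc |φ (kn m) x - φ (kn n) x|
        = |(φ (kn m) x - φ (kn m) (D i)) + (φ (kn m) (D i) - φ (kn n) (D i))
            + (φ (kn n) (D i) - φ (kn n) x)| := by ring_nf
      _ ≤ |φ (kn m) x - φ (kn m) (D i)| + |φ (kn m) (D i) - φ (kn n) (D i)|
            + |φ (kn n) (D i) - φ (kn n) x| := abs_add_three _ _ _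
      _ < ε / 3 + ε / 3 + ε / 3 := by
          have e2' : |φ (kn n) (D i) - φ (kn n) x| < ε / 3 := by rwa [abs_sub_comm] at e2
          exact add_lt_add (add_lt_add e1 hN') e2'
      _ = ε := by ring
  choose g hg using hlim
  -- step 4: the limit is linear
  refine ⟨kn, { toFun := g
                map_add' := fun x y => ?_
                map_smul' := fun r x => ?_ }, hknmono, fun x => hg x, fun x => ?_⟩
  · exact tendsto_nhds_unique (hg (x + y))
      (by simpa only [map_add] using (hg x).add (hg y))
  · simp only [RingHom.id_apply, smul_eq_mul]
    exact tendsto_nhds_unique (hg (r • x))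
      (by simpa only [map_smul, smul_eq_mul] using (hg x).const_mul r)
  -- step 5: the bound on the limit
  · have h1 : Tendsto (fun n => |φ (kn n) x|) atTop (nhds |g x|) := (hg x).abs
    have h2 : Tendsto (fun n => c (kn n) * p (kn n) x) atTop (nhds (L * p 0 x)) := by
      have hc' : Tendsto (fun n => c (kn n)) atTop (nhds L) :=
        hjL.comp hψ.tendsto_atTop
      have hp' : Tendsto (fun n => p (kn n) x) atTop (nhds (p 0 x)) :=
        (hconv x).comp hknmono.tendsto_atTop
      exact hc'.mul hp'
    exact le_of_tendsto_of_tendsto' h1 h2 fun n => hφ (kn n) x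
end

section
/- Let $u : (0,1) \times \mathbb{R}^d \to \mathbb{R}$ be a smooth solution of the Hamilton–Jacobi equation $\partial_t u + \frac{1}{2}(|u|^2 + |\nabla u|^2) = 0$ with $\nabla u \neq 0$. Then along the flow, $\partial_t(\nabla u) + (\nabla u \cdot \nabla)(\nabla u) = -u \nabla u$, and consequently the direction field satisfies $\partial_t\left(\frac{\nabla u}{|\nabla u|}\right) + (\nabla u \cdot \nabla)\left(\frac{\nabla u}{|\nabla u|}\right) = 0$. -/
open InnerProductSpace Real

local notation "⟪" x ", " y "⟫" => @inner ℝ _ _ x y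

private lemma hj_scalar_aux (r c Q : ℝ) (hr : r ≠ 0) :
    r⁻¹ * (-c * 1) + -((-c * r ^ 2 - Q + (-c * r ^ 2 - Q)) / (2 * r)) / r ^ 2 * 1 +
      -(r ^ 2)⁻¹ * (1 / (2 * r) * (Q + Q)) * 1 = 0 := by
  field_simp
  ring

/-- A smooth solution of the Hamilton–Jacobi equation
`∂ₜu + ½(|u|² + |∇u|²) = 0` with nonvanishing gradient satisfies
`∂ₜ(∇u) + (∇u·∇)(∇u) = -u ∇u`, and hence the unit direction field of `∇u` is
transported: `D/Dt (∇u/|∇u|) = 0`. -/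
theorem hamilton_jacobi_straight_lines {d : ℕ}
    (u : ℝ → EuclideanSpace ℝ (Fin d) → ℝ)
    (hu : ContDiff ℝ (⊤ : ℕ∞) (Function.uncurry u))
    (hgrad : ∀ t ∈ Set.Ioo (0:ℝ) 1, ∀ x, gradient (u t) x ≠ 0)
    (hHJ : ∀ t ∈ Set.Ioo (0:ℝ) 1, ∀ x,
      deriv (fun s => u s x) t + (1/2) * ((u t x)^2 + ‖gradient (u t) x‖^2) = 0) :
    ∀ t ∈ Set.Ioo (0:ℝ) 1, ∀ x,
      (deriv (fun s => gradient (u s) x) t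
          + fderiv ℝ (fun y => gradient (u t) y) x (gradient (u t) x)
        = -(u t x) • gradient (u t) x) ∧
      (deriv (fun s => ‖gradient (u s) x‖⁻¹ • gradient (u s) x) t
          + fderiv ℝ (fun y => ‖gradient (u t) y‖⁻¹ • gradient (u t) y) x
              (gradient (u t) x)
        = 0) := by
  set J : EuclideanSpace ℝ (Fin d) →L[ℝ] ℝ × EuclideanSpace ℝ (Fin d) :=
    (0 : EuclideanSpace ℝ (Fin d) →L[ℝ] ℝ).prod (ContinuousLinearMap.id ℝ _) with hJ
  -- first and second derivatives, with symmetry of the second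
  obtain ⟨B, H, hB, hBfd, hsym, hHfd⟩ : ∃ (B : ℝ × EuclideanSpace ℝ (Fin d) →
        ((ℝ × EuclideanSpace ℝ (Fin d)) →L[ℝ] ℝ))
      (H : ℝ × EuclideanSpace ℝ (Fin d) →
        ((ℝ × EuclideanSpace ℝ (Fin d)) →L[ℝ]
          ((ℝ × EuclideanSpace ℝ (Fin d)) →L[ℝ] ℝ))),
      ContDiff ℝ (⊤ : ℕ∞) B ∧ (∀ p, HasFDerivAt (Function.uncurry u) (B p) p) ∧
      (∀ p v w, H p v w = H p w v) ∧ ∀ p, HasFDerivAt B (H p) p := by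
    have hB : ContDiff ℝ (⊤ : ℕ∞) (fderiv ℝ (Function.uncurry u)) := hu.fderiv_right (by simp)
    exact ⟨fderiv ℝ (Function.uncurry u), fderiv ℝ (fderiv ℝ (Function.uncurry u)),
      hB, fun p => (hu.differentiable (by simp) p).hasFDerivAt,
      fun p v w => (hu.contDiffAt.isSymmSndFDerivAt (by rw [minSmoothness_of_isRCLikeNormedField]; exact WithTop.coe_le_coe.mpr (le_top : (2 : ℕ∞) ≤ ⊤))) v w,
      fun p => (hB.differentiable (by simp) p).hasFDerivAt⟩
  -- the dual-transpose map
  obtain ⟨L, hL⟩ : ∃ L : ((ℝ × EuclideanSpace ℝ (Fin d)) →L[ℝ] ℝ) →L[ℝ]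
        EuclideanSpace ℝ (Fin d),
      ∀ (φ : (ℝ × EuclideanSpace ℝ (Fin d)) →L[ℝ] ℝ) (w : EuclideanSpace ℝ (Fin d)),
        ⟪L φ, w⟫ = φ (0, w) := by
    refine ⟨((toDual ℝ (EuclideanSpace ℝ (Fin d))).symm.toContinuousLinearEquiv :
        _ ≃L[ℝ] _).toContinuousLinearMap.comp
        ((ContinuousLinearMap.compL ℝ (EuclideanSpace ℝ (Fin d))
          (ℝ × EuclideanSpace ℝ (Fin d)) ℝ).flip J), fun φ w => ?_⟩
    simp [toDual_symm_apply, hJ]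
  -- the gradient as a jointly smooth map
  obtain ⟨G, hGB, hGsm, hGeq, hGfd⟩ : ∃ G : ℝ × EuclideanSpace ℝ (Fin d) →
        EuclideanSpace ℝ (Fin d),
      (∀ p, G p = L (B p)) ∧ ContDiff ℝ (⊤ : ℕ∞) G ∧
      (∀ t x, G (t, x) = gradient (u t) x) ∧
      (∀ p, HasFDerivAt G (L.comp (H p)) p) := by
    refine ⟨fun p => L (B p), fun p => rfl, L.contDiff.comp hB, fun t x => ?_,
      fun p => L.hasFDerivAt.comp p (hHfd p)⟩
    have hpart : HasFDerivAt (u t) ((B (t, x)).comp J) x :=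
      (hBfd (t, x)).comp x ((hasFDerivAt_const t x).prodMk (hasFDerivAt_id x))
    refine ext_inner_right ℝ fun w => ?_
    rw [hL]
    have hgr : gradient (u t) x = (toDual ℝ _).symm (fderiv ℝ (u t) x) := rfl
    rw [hgr, toDual_symm_apply, hpart.fderiv]
    simp [hJ]
  have hginner : ∀ t x w, ⟪gradient (u t) x, w⟫ = B (t, x) (0, w) := fun t x w => by
    rw [← hGeq, hGB, hL]
  intro t ht x
  have hxinc : HasFDerivAt (fun y : EuclideanSpace ℝ (Fin d) => (t, y)) J x :=
    (hasFDerivAt_const t x).prodMk (hasFDerivAt_id x)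
  have hJw : ∀ w : EuclideanSpace ℝ (Fin d), J w = (0, w) := by intro w; simp [hJ]
  have hγ : HasDerivAt (fun s => G (s, x)) (L (H (t, x) (1, 0))) t := by
    have h := (hGfd (t, x)).comp_hasDerivAt t
      ((hasDerivAt_id t).prodMk (hasDerivAt_const t x))
    simp at h; exact h
  have hDg : HasFDerivAt (fun y => G (t, y)) ((L.comp (H (t, x))).comp J) x :=
    (hGfd (t, x)).comp x hxinc
  have hτ : ∀ y, HasDerivAt (fun s => u s y) (B (t, y) (1, 0)) t := fun y => by
    have h := (hBfd (t, y)).comp_hasDerivAt t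
      ((hasDerivAt_id t).prodMk (hasDerivAt_const t y))
    simp at h; exact h
  have hpart : HasFDerivAt (u t) ((B (t, x)).comp J) x := (hBfd (t, x)).comp x hxinc
  have hHJ' : ∀ y, B (t, y) (1, 0)
      + ((1/2) * (u t y * u t y) + (1/2) * ⟪G (t, y), G (t, y)⟫) = 0 := by
    intro y
    have h0 := hHJ t ht y
    rw [(hτ y).deriv, pow_two] at h0
    have hn : ⟪G (t, y), G (t, y)⟫ = ‖gradient (u t) y‖^2 := by
      rw [hGeq]; exact real_inner_self_eq_norm_sq _
    rw [hn]; linarith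
  have hb : HasFDerivAt (fun y => B (t, y)) ((H (t, x)).comp J) x :=
    (hHfd (t, x)).comp x hxinc
  have ha := hb.clm_apply (hasFDerivAt_const ((1:ℝ), (0:EuclideanSpace ℝ (Fin d))) x)
  have hb2 := (hpart.mul hpart).const_mul ((1:ℝ)/2)
  have hc2 := (HasFDerivAt.inner ℝ hDg hDg).const_mul ((1:ℝ)/2)
  have hφ : HasFDerivAt (fun y => B (t, y) (1, 0)
      + ((1/2) * (u t y * u t y) + (1/2) * ⟪G (t, y), G (t, y)⟫)) _ x := ha.add (hb2.add hc2)
  rw [show (fun y => B (t, y) (1, 0)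
      + ((1/2) * (u t y * u t y) + (1/2) * ⟪G (t, y), G (t, y)⟫))
      = fun _ => (0:ℝ) from funext hHJ'] at hφ
  have hDeq := hφ.unique (hasFDerivAt_const 0 x)
  have hkey : ∀ v, H (t, x) (0, v) (1, 0) + u t x * B (t, x) (0, v)
      + H (t, x) (0, v) (0, G (t, x)) = 0 := by
    intro v
    have h := DFunLike.congr_fun hDeq v
    simp only [ContinuousLinearMap.add_apply, ContinuousLinearMap.coe_comp',
      Function.comp_apply, ContinuousLinearMap.flip_apply, ContinuousLinearMap.smul_apply,
      ContinuousLinearMap.zero_apply, ContinuousLinearMap.comp_zero, smul_eq_mul,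
      fderivInnerCLM_apply, ContinuousLinearMap.prod_apply, hJw, hL,
      real_inner_comm (G (t, x))] at h
    rw [real_inner_comm, hL] at h
    linarith
  have hflow : L (H (t, x) (1, 0)) + L (H (t, x) (0, gradient (u t) x))
      = -(u t x) • gradient (u t) x := by
    refine ext_inner_right ℝ fun w => ?_
    rw [inner_add_left, hL, hL, real_inner_smul_left,
      hsym _ _ (0, w), hsym _ (0, gradient (u t) x) (0, w), hginner]
    have := hkey w
    rw [hGeq] at this
    linarith
  have hfun1 : (fun s => gradient (u s) x) = fun s => G (s, x) := by
    funext s; rw [hGeq]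
  have hfun2 : (fun y => gradient (u t) y) = fun y => G (t, y) := by
    funext y; rw [hGeq]
  have part1 : deriv (fun s => gradient (u s) x) t
      + fderiv ℝ (fun y => gradient (u t) y) x (gradient (u t) x)
      = -(u t x) • gradient (u t) x := by
    rw [hfun1, hfun2, hγ.deriv, hDg.fderiv]
    simpa [hJw] using hflow
  refine ⟨part1, ?_⟩
  have hgx0 : gradient (u t) x ≠ 0 := hgrad t ht x
  set gx := gradient (u t) x with hgxdef
  set a := L (H (t, x) (1, 0)) with hadef
  set q := L (H (t, x) (0, gx)) with hqdef
  have hGx : G (t, x) = gx := hGeq t x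
  have hno : ‖gx‖ ≠ 0 := norm_ne_zero_iff.mpr hgx0
  have hii : ⟪G (t, x), G (t, x)⟫ = ‖gx‖ ^ 2 := by
    rw [hGx]; exact real_inner_self_eq_norm_sq _
  have hne : ⟪G (t, x), G (t, x)⟫ ≠ 0 := by
    rw [hii]; exact pow_ne_zero _ hno
  have hρs : √⟪G (t, x), G (t, x)⟫ = ‖gx‖ := by
    rw [hii]; exact Real.sqrt_sq (norm_nonneg _)
  have hsne : √⟪G (t, x), G (t, x)⟫ ≠ 0 := by rw [hρs]; exact hno
  have hnorm_eq : ∀ (s : ℝ) (y : EuclideanSpace ℝ (Fin d)),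
      ‖gradient (u s) y‖ = √⟪G (s, y), G (s, y)⟫ := by
    intro s y; rw [hGeq, real_inner_self_eq_norm_sq, Real.sqrt_sq (norm_nonneg _)]
  have hfun3 : (fun s => ‖gradient (u s) x‖⁻¹ • gradient (u s) x)
      = fun s => (√⟪G (s, x), G (s, x)⟫)⁻¹ • G (s, x) := by
    funext s; rw [hnorm_eq, hGeq]
  have hfun4 : (fun y => ‖gradient (u t) y‖⁻¹ • gradient (u t) y)
      = fun y => (√⟪G (t, y), G (t, y)⟫)⁻¹ • G (t, y) := by
    funext y; rw [hnorm_eq, hGeq]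
  -- time derivative of the unit field
  have hsqt : HasDerivAt (fun s => √⟪G (s, x), G (s, x)⟫)
      ((⟪G (t, x), a⟫ + ⟪a, G (t, x)⟫) / (2 * √⟪G (t, x), G (t, x)⟫)) t :=
    (HasDerivAt.inner ℝ hγ hγ).sqrt hne
  have hinvt : HasDerivAt (fun s => (√⟪G (s, x), G (s, x)⟫)⁻¹) _ t := hsqt.inv hsne
  have hnt : HasDerivAt (fun s => (√⟪G (s, x), G (s, x)⟫)⁻¹ • G (s, x)) _ t := hinvt.smul hγ
  -- space derivative of the unit field
  have hsqx : HasFDerivAt (fun y => √⟪G (t, y), G (t, y)⟫)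
      ((1 / (2 * √⟪G (t, x), G (t, x)⟫)) •
        ((fderivInnerCLM ℝ (G (t, x), G (t, x))).comp
          (((L.comp (H (t, x))).comp J).prod ((L.comp (H (t, x))).comp J)))) x :=
    (HasFDerivAt.inner ℝ hDg hDg).sqrt hne
  have hinvx : HasFDerivAt (fun y => (√⟪G (t, y), G (t, y)⟫)⁻¹)
      ((-(√⟪G (t, x), G (t, x)⟫ ^ 2)⁻¹) •
        ((1 / (2 * √⟪G (t, x), G (t, x)⟫)) •
          ((fderivInnerCLM ℝ (G (t, x), G (t, x))).comp
            (((L.comp (H (t, x))).comp J).prod ((L.comp (H (t, x))).comp J))))) x :=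
    (hasDerivAt_inv hsne).comp_hasFDerivAt x hsqx
  have hnx : HasFDerivAt (fun y => (√⟪G (t, y), G (t, y)⟫)⁻¹ • G (t, y)) _ x := hinvx.smul hDg
  rw [hfun3, hfun4, hnt.deriv, hnx.fderiv]
  have ha_eq : a = -(u t x) • gx - q := eq_sub_of_add_eq hflow
  simp only [ContinuousLinearMap.add_apply, ContinuousLinearMap.smul_apply,
    ContinuousLinearMap.smulRight_apply, ContinuousLinearMap.coe_comp',
    Function.comp_apply, fderivInnerCLM_apply, ContinuousLinearMap.prod_apply,
    hJw, hGx, hρs, smul_eq_mul]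
  rw [← hqdef]
  rw [real_inner_comm a gx, real_inner_comm q gx]
  rw [ha_eq]
  have h1 : √⟪gx, gx⟫ = ‖gx‖ := by
    rw [real_inner_self_eq_norm_sq]; exact Real.sqrt_sq (norm_nonneg _)
  rw [h1, inner_sub_left (𝕜 := ℝ), real_inner_smul_left,
    real_inner_self_eq_norm_sq]
  clear_value gx a q
  clear hτ hb ha hb2 hc2 hφ hDeq hkey hHJ' hflow ha_eq hfun1 hfun2 hfun3 hfun4
    part1 hsqt hinvt hnt hsqx hinvx hnx hγ hDg hpart hxinc hgrad hHJ hu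
    hB hBfd hsym hHfd hL hGB hGsm hGeq hGfd hginner hgx0 hGx hii hne hρs hsne
    hnorm_eq hJw hJ h1
  generalize hQv : (⟪q, gx⟫) = Q
  generalize hUv : u t x = c
  generalize hRv : ‖gx‖ = r at hno ⊢
  match_scalars
  · exact hj_scalar_aux r c Q hno
  · ring
end
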